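/- Underconditioning bias: for disjoint sets of binary variables X, Y, Z with strictly positive joint distribution, the difference between the interaction of X conditioned on Y=0, Z=0 and the interaction of X conditioned only on Z=0 equals the iterated Boolean derivative (over the variables of X) of the pointwise mutual information pmi(X=x, Y=0 | Z=0) = log[ p(X=x, Y=0 | Z=0) / ( p(X=x|Z=0) p(Y=0|Z=0) ) ]. -/

import Mathlib

open Finset

/-- The Boolean (discrete) partial derivative of `f` with respect to variable `i`. -/
def boolDeriv {ι : Type*} [DecidableEq ι] (i : ι) (f : (ι → Bool) → ℝ) :
    (ι → Bool) → ℝ :=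
  fun x => f (Function.update x i true) - f (Function.update x i false)

/-- The iterated Boolean derivative with respect to a list of variables. -/
def iterBoolDeriv {ι : Type*} [DecidableEq ι] :
    List ι → ((ι → Bool) → ℝ) → ((ι → Bool) → ℝ)
  | [], f => f
  | i :: l, f => boolDeriv i (iterBoolDeriv l f)

/-- Probability of the event that the variables in `X` take the values prescribed by
`x`, the variables in `Y` are all `0`, and the variables in `Z` are all `0`
(marginalising over all remaining variables). -/
def prEvent {ι : Type*} [Fintype ι] [DecidableEq ι] (p : (ι → Bool) → ℝ)
    (X Y Z : Finset ι) (x : ι → Bool) : ℝ :=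
  ∑ σ ∈ Finset.univ.filter (fun σ : ι → Bool =>
      (∀ i ∈ X, σ i = x i) ∧ (∀ i ∈ Y, σ i = false) ∧ (∀ i ∈ Z, σ i = false)), p σ

/-!
Bayes' rule gives `p(X=x | Y=0, Z=0) = p(X=x | Z=0) · exp pmi(X=x, Y=0 | Z=0)`, so after taking
logarithms the two conditional log-probabilities differ by the pointwise mutual information, and
the iterated Boolean derivative is linear.
-/

lemma iterBoolDeriv_sub {ι : Type*} [DecidableEq ι] (l : List ι) (f g : (ι → Bool) → ℝ) :
    iterBoolDeriv l (fun x => f x - g x) =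
      fun x => iterBoolDeriv l f x - iterBoolDeriv l g x := by
  induction l generalizing f g with
  | nil => rfl
  | cons i l ih =>
    funext x
    simp only [iterBoolDeriv, ih, boolDeriv]
    ring

lemma prEvent_pos {ι : Type*} [Fintype ι] [DecidableEq ι] {p : (ι → Bool) → ℝ}
    (hpos : ∀ σ, 0 < p σ) {X Y Z : Finset ι} (hXY : Disjoint X Y) (hXZ : Disjoint X Z)
    (x : ι → Bool) : 0 < prEvent p X Y Z x := by
  refine Finset.sum_pos (fun σ _ => hpos σ) ⟨fun i => if i ∈ X then x i else false, ?_⟩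
  simp only [Finset.mem_filter, Finset.mem_univ, true_and]
  refine ⟨fun i hi => if_pos hi, fun i hi => if_neg ?_, fun i hi => if_neg ?_⟩
  · exact fun hX => Finset.disjoint_left.mp hXY hX hi
  · exact fun hX => Finset.disjoint_left.mp hXZ hX hi

lemma Real.log_div_div_mul_div {a b c d : ℝ} (ha : 0 < a) (hb : 0 < b) (hc : 0 < c)
    (hd : 0 < d) :
    Real.log ((a / d) / ((b / d) * (c / d))) = Real.log (a / c) - Real.log (b / d) := by
  have hregroup : (a / d) / ((b / d) * (c / d)) = (a / c) / (b / d) := by field_simp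
  rw [hregroup, Real.log_div (div_pos ha hc).ne' (div_pos hb hd).ne']

theorem underconditioning_bias_general {ι : Type*} [Fintype ι] [DecidableEq ι]
    (p : (ι → Bool) → ℝ) (hpos : ∀ σ, 0 < p σ)
    (X Y Z : Finset ι) (hXY : Disjoint X Y) (hXZ : Disjoint X Z)
    (l : List ι) :
    iterBoolDeriv l
        (fun x => Real.log (prEvent p X Y Z x / prEvent p ∅ Y Z x)) (fun _ => false) -
      iterBoolDeriv l
        (fun x => Real.log (prEvent p X ∅ Z x / prEvent p ∅ ∅ Z x)) (fun _ => false) =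
    iterBoolDeriv l
        (fun x => Real.log ((prEvent p X Y Z x / prEvent p ∅ ∅ Z x) /
          ((prEvent p X ∅ Z x / prEvent p ∅ ∅ Z x) *
            (prEvent p ∅ Y Z x / prEvent p ∅ ∅ Z x)))) (fun _ => false) := by
  have hpmi : (fun x => Real.log ((prEvent p X Y Z x / prEvent p ∅ ∅ Z x) /
        ((prEvent p X ∅ Z x / prEvent p ∅ ∅ Z x) * (prEvent p ∅ Y Z x / prEvent p ∅ ∅ Z x)))) =
      fun x => Real.log (prEvent p X Y Z x / prEvent p ∅ Y Z x) -
        Real.log (prEvent p X ∅ Z x / prEvent p ∅ ∅ Z x) :=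
    funext fun x => Real.log_div_div_mul_div (prEvent_pos hpos hXY hXZ x)
      (prEvent_pos hpos (disjoint_empty_right X) hXZ x)
      (prEvent_pos hpos (disjoint_empty_left Y) (disjoint_empty_left Z) x)
      (prEvent_pos hpos (disjoint_empty_left ∅) (disjoint_empty_left Z) x)
  rw [hpmi, iterBoolDeriv_sub]

/-- Underconditioning bias: for disjoint sets `X`, `Y`, `Z` of binary variables
(within a finite collection `S` with strictly positive joint distribution `p`), the
difference between the interaction of `X` conditioned on `Y = 0, Z = 0` and the
interaction of `X` conditioned only on `Z = 0` equals the iterated Boolean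
derivative, over the variables of `X`, of the pointwise mutual information
`pmi(X = x, Y = 0 | Z = 0)
  = log [ p(X=x, Y=0 | Z=0) / (p(X=x | Z=0) · p(Y=0 | Z=0)) ]`. -/
theorem underconditioning_bias {ι : Type*} [Fintype ι] [DecidableEq ι]
    (p : (ι → Bool) → ℝ) (hpos : ∀ σ, 0 < p σ) (hsum : ∑ σ, p σ = 1)
    (X Y Z : Finset ι) (hXY : Disjoint X Y) (hXZ : Disjoint X Z)
    (hYZ : Disjoint Y Z)
    (l : List ι) (hl : l.Nodup) (hlX : l.toFinset = X) :
    iterBoolDeriv l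
        (fun x => Real.log (prEvent p X Y Z x / prEvent p ∅ Y Z x)) (fun _ => false) -
      iterBoolDeriv l
        (fun x => Real.log (prEvent p X ∅ Z x / prEvent p ∅ ∅ Z x)) (fun _ => false) =
    iterBoolDeriv l
        (fun x => Real.log ((prEvent p X Y Z x / prEvent p ∅ ∅ Z x) /
          ((prEvent p X ∅ Z x / prEvent p ∅ ∅ Z x) *
            (prEvent p ∅ Y Z x / prEvent p ∅ ∅ Z x)))) (fun _ => false) :=
  underconditioning_bias_general p hpos X Y Z hXY hXZ l
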